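/- Let g(n) be the number of Dyck paths of semilength n whose mex is 2, i.e., Dyck paths having at least one peak at height 1 and no peak at height 2. Then in ℤ⟦X⟧ one has (1 + X + X^2·C(X)) · Σ_{n≥0} g(n) X^n = X(1 − X) + 3X^2·C(X). -/

import Mathlib

open DyckStep

/-- A Dyck word `p` has a peak at height `h`: an up-step immediately followed by a
down-step, such that the prefix ending with that up-step has `h` more `U`s than `D`s. -/
def DyckWord.HasPeakAtHeight (p : DyckWord) (h : ℕ) : Prop :=
  ∃ i, i + 1 < p.toList.length ∧ p.toList.getD i D = U ∧ p.toList.getD (i + 1) U = D ∧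
    (p.toList.take (i + 1)).count U = (p.toList.take (i + 1)).count D + h

/-- The generating function of the Catalan numbers, `C(X) = Σ_{n≥0} catalan(n) Xⁿ`. -/
noncomputable def catalanGF : PowerSeries ℤ :=
  PowerSeries.mk fun n => (catalan n : ℤ)

/-!
Every nonempty Dyck path factors uniquely as `U q D r` (first return decomposition), and a
peak of `U q D r` at height `h + 1` is either a peak of `q` at height `h`, a peak of `r` at
height `h + 1`, or, when `q` is empty and `h = 0`, the peak `UD` itself. This turns the
generating functions `B` (no peak at height 1), `T` (no peak at height 2) and `H` (no peak at
height 1 or 2) into solutions of `B = 1 + X (C - 1) B`, `T = 1 + X B T`, `H = 1 + X (B - 1) H`,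
from which `T = 1 + X C`; the paths of mex 2 are counted by `T - H`.
-/

open Finset in
theorem Nat.card_subtype_add_eq_sum_antidiagonal {α β : Type*} (f : α → ℕ) (g : β → ℕ)
    (P : α → Prop) (R : β → Prop) [∀ i, Finite {a // f a = i ∧ P a}]
    [∀ j, Finite {b // g b = j ∧ R b}] (n : ℕ) :
    Nat.card {x : α × β // f x.1 + g x.2 = n ∧ P x.1 ∧ R x.2} =
      ∑ ij ∈ antidiagonal n,
        Nat.card {a // f a = ij.1 ∧ P a} * Nat.card {b // g b = ij.2 ∧ R b} := by
  let e : {x : α × β // f x.1 + g x.2 = n ∧ P x.1 ∧ R x.2} ≃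
      Σ ij : antidiagonal n, {a // f a = ij.1.1 ∧ P a} × {b // g b = ij.1.2 ∧ R b} :=
    { toFun x := ⟨⟨(f x.1.1, g x.1.2), mem_antidiagonal.2 x.2.1⟩, ⟨x.1.1, rfl, x.2.2.1⟩,
        ⟨x.1.2, rfl, x.2.2.2⟩⟩
      invFun y := ⟨(y.2.1.1, y.2.2.1), by rw [y.2.1.2.1, y.2.2.2.1]; exact mem_antidiagonal.1 y.1.2,
        y.2.1.2.2, y.2.2.2.2⟩
      left_inv x := rfl
      right_inv := by
        rintro ⟨⟨⟨i, j⟩, h⟩, ⟨a, ha⟩, ⟨b, hb⟩⟩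
        dsimp only at ha hb
        rcases ha with ⟨rfl, ha⟩
        rcases hb with ⟨rfl, hb⟩
        rfl }
  rw [Nat.card_congr e, Nat.card_sigma, ← sum_coe_sort (antidiagonal n)]
  simp_rw [Nat.card_prod]

namespace DyckWord
open List

lemma semilength_eq_zero_iff {p : DyckWord} : p.semilength = 0 ↔ p = 0 := by
  refine ⟨fun hp => by_contra fun h0 => ?_, fun h => h ▸ semilength_zero⟩
  simpa [hp] using strictMono_semilength (DyckWord.pos_iff_ne_zero.2 h0)

@[simp] lemma toList_zero : (0 : DyckWord).toList = [] := rfl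

@[simp] lemma toList_add (p q : DyckWord) : (p + q).toList = p.toList ++ q.toList := rfl

@[simp] lemma toList_nest (p : DyckWord) : p.nest.toList = U :: (p.toList ++ [D]) := by
  simp [nest]

lemma toList_ne_D_cons (p : DyckWord) (l : List DyckStep) : p.toList ≠ D :: l := fun hp => by
  simpa [hp] using p.head_eq_U (by simp [hp])

lemma toList_ne_append_U (p : DyckWord) (l : List DyckStep) : p.toList ≠ l ++ [U] := fun hp => by
  simpa [hp] using p.getLast_eq_D (by simp [hp])

lemma hasPeakAtHeight_iff_exists_append {p : DyckWord} {h : ℕ} :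
    p.HasPeakAtHeight h ↔
      ∃ l₁ l₂, p.toList = l₁ ++ U :: D :: l₂ ∧ l₁.count U + 1 = l₁.count D + h := by
  constructor
  · rintro ⟨i, hi, hU, hD, hc⟩
    rw [getD_eq_getElem _ _ (by omega)] at hU
    rw [getD_eq_getElem _ _ hi] at hD
    refine ⟨p.toList.take i, p.toList.drop (i + 2), ?_, ?_⟩
    · conv_lhs => rw [← take_append_drop i p.toList, drop_eq_getElem_cons (by omega),
        drop_eq_getElem_cons hi, hU, hD]
    · rw [← take_concat_get' _ _ (by omega), hU] at hc
      simpa using hc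
  · rintro ⟨l₁, l₂, hp, hc⟩
    refine ⟨l₁.length, by simp [hp], by simp [hp], by simp [hp], ?_⟩
    rw [hp, take_length_add_append]
    simpa using hc

lemma not_hasPeakAtHeight_zero (p : DyckWord) : ¬ p.HasPeakAtHeight 0 := by
  rw [hasPeakAtHeight_iff_exists_append]
  rintro ⟨l₁, l₂, hp, hc⟩
  have := p.count_D_le_count_U l₁.length
  simp [hp] at this
  omega

lemma not_zero_hasPeakAtHeight (h : ℕ) : ¬ (0 : DyckWord).HasPeakAtHeight h := by
  rw [hasPeakAtHeight_iff_exists_append]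
  rintro ⟨l₁, l₂, hp, -⟩
  simp at hp

lemma hasPeakAtHeight_add {p q : DyckWord} {h : ℕ} :
    (p + q).HasPeakAtHeight h ↔ p.HasPeakAtHeight h ∨ q.HasPeakAtHeight h := by
  simp only [hasPeakAtHeight_iff_exists_append]
  constructor
  · rintro ⟨l₁, l₂, hpq, hc⟩
    rcases append_eq_append_iff.1 hpq with ⟨m, rfl, hq⟩ | ⟨m, hp, hm⟩
    · refine .inr ⟨m, l₂, hq, ?_⟩
      simp only [count_append, p.count_U_eq_count_D] at hc
      omega
    · rcases m with _ | ⟨x, _ | ⟨y, m⟩⟩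
      · rw [append_nil] at hp
        subst hp
        refine .inr ⟨[], l₂, hm.symm, ?_⟩
        simp only [p.count_U_eq_count_D] at hc
        simp only [count_nil]
        omega
      · obtain ⟨rfl, -⟩ := cons_eq_cons.1 hm
        exact absurd hp (p.toList_ne_append_U l₁)
      · obtain ⟨rfl, rfl, -⟩ : U = x ∧ D = y ∧ _ := by simpa using hm
        exact .inl ⟨l₁, m, hp, hc⟩
  · rintro (⟨l₁, l₂, hp, hc⟩ | ⟨l₁, l₂, hq, hc⟩)
    · exact ⟨l₁, l₂ ++ q.toList, by simp [hp], hc⟩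
    · refine ⟨p.toList ++ l₁, l₂, by simp [hq], ?_⟩
      simp only [count_append, p.count_U_eq_count_D]
      omega

lemma hasPeakAtHeight_nest_succ {p : DyckWord} {h : ℕ} :
    p.nest.HasPeakAtHeight (h + 1) ↔ (p = 0 ∧ h = 0) ∨ p.HasPeakAtHeight h := by
  simp only [hasPeakAtHeight_iff_exists_append, toList_nest]
  constructor
  · rintro ⟨_ | ⟨x, l₁⟩, l₂, hp, hc⟩
    · obtain ⟨-, hp⟩ := cons_eq_cons.1 hp
      rcases hp' : p.toList with _ | ⟨x, m⟩
      · refine .inl ⟨toList_eq_nil.1 hp', ?_⟩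
        simpa using hc
      · obtain ⟨rfl, -⟩ : x = D ∧ _ := by simpa [hp'] using hp
        exact absurd hp' (p.toList_ne_D_cons m)
    · rw [cons_append, cons_eq_cons] at hp
      obtain ⟨rfl, hp⟩ := hp
      rcases append_eq_append_iff.1 hp with ⟨m, -, hm⟩ | ⟨m, hp, hm⟩
      · have := congrArg length hm
        simp at this
        omega
      · rcases m with _ | ⟨x, _ | ⟨y, m⟩⟩
        · simp at hm
        · obtain ⟨rfl, -⟩ := cons_eq_cons.1 hm
          exact absurd hp (p.toList_ne_append_U l₁)
        · obtain ⟨rfl, rfl, -⟩ : U = x ∧ D = y ∧ _ := by simpa using hm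
          refine .inr ⟨l₁, m, hp, ?_⟩
          simp at hc
          omega
  · rintro (⟨rfl, rfl⟩ | ⟨l₁, l₂, hp, hc⟩)
    · exact ⟨[], [], rfl, rfl⟩
    · refine ⟨U :: l₁, l₂ ++ [D], by simp [hp], ?_⟩
      simp
      omega

lemma hasPeakAtHeight_nest_add_succ {p q : DyckWord} {h : ℕ} :
    (p.nest + q).HasPeakAtHeight (h + 1) ↔
      (p = 0 ∧ h = 0) ∨ p.HasPeakAtHeight h ∨ q.HasPeakAtHeight (h + 1) := by
  rw [hasPeakAtHeight_add, hasPeakAtHeight_nest_succ, or_assoc]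

def nestAddEquiv : DyckWord × DyckWord ≃ {p : DyckWord // p ≠ 0} where
  toFun x := ⟨x.1.nest + x.2, by simp⟩
  invFun p := (p.1.insidePart, p.1.outsidePart)
  left_inv x := by simp
  right_inv p := Subtype.ext (nest_insidePart_add_outsidePart p.2)

instance (Q : DyckWord → Prop) (n : ℕ) : Finite {p : DyckWord // p.semilength = n ∧ Q p} :=
  Finite.of_injective (fun p => (⟨p.1, p.2.1⟩ : {p : DyckWord // p.semilength = n}))
    fun _ _ h => Subtype.ext (Subtype.mk.inj h)

lemma card_semilength_succ {Q Q₁ Q₂ : DyckWord → Prop}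
    (hQ : ∀ q r, Q (q.nest + r) ↔ Q₁ q ∧ Q₂ r) (n : ℕ) :
    Nat.card {p : DyckWord // p.semilength = n + 1 ∧ Q p} =
      Nat.card {x : DyckWord × DyckWord //
        x.1.semilength + x.2.semilength = n ∧ Q₁ x.1 ∧ Q₂ x.2} := by
  refine Nat.card_congr ((Equiv.subtypeSubtypeEquivSubtype ?_).symm.trans
    (nestAddEquiv.subtypeEquiv ?_).symm)
  · rintro p ⟨hp, -⟩ rfl
    simp at hp
  · intro x
    simp [nestAddEquiv, hQ]
    omega

open PowerSeries

noncomputable def countingGF (Q : DyckWord → Prop) : PowerSeries ℤ :=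
  PowerSeries.mk fun n => (Nat.card {p : DyckWord // p.semilength = n ∧ Q p} : ℤ)

lemma coeff_zero_countingGF {Q : DyckWord → Prop} (h0 : Q 0) : coeff 0 (countingGF Q) = 1 := by
  have : Unique {p : DyckWord // p.semilength = 0 ∧ Q p} :=
    { default := ⟨0, rfl, h0⟩
      uniq p := Subtype.ext (semilength_eq_zero_iff.1 p.2.1) }
  simp [countingGF]

lemma countingGF_eq_one_add_X_mul {Q Q₁ Q₂ : DyckWord → Prop} (h0 : Q 0)
    (hQ : ∀ q r, Q (q.nest + r) ↔ Q₁ q ∧ Q₂ r) :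
    countingGF Q = 1 + X * (countingGF Q₁ * countingGF Q₂) := by
  ext (_ | n)
  · simp [coeff_zero_countingGF h0]
  · rw [countingGF, coeff_mk, card_semilength_succ hQ, Nat.card_subtype_add_eq_sum_antidiagonal,
      map_add, coeff_succ_X_mul, coeff_mul]
    simp [countingGF]

lemma countingGF_true : countingGF (fun _ => True) = catalanGF := by
  ext n
  simp [countingGF, catalanGF, Nat.card_eq_fintype_card, card_dyckWord_semilength_eq_catalan]

lemma countingGF_ne_zero_and {Q : DyckWord → Prop} (h0 : Q 0) :
    countingGF (fun p => p ≠ 0 ∧ Q p) = countingGF Q - 1 := by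
  ext (_ | n)
  · have : IsEmpty {p : DyckWord // p.semilength = 0 ∧ p ≠ 0 ∧ Q p} :=
      ⟨fun p => p.2.2.1 (semilength_eq_zero_iff.1 p.2.1)⟩
    rw [map_sub, coeff_zero_countingGF h0, countingGF, coeff_mk, Nat.card_of_isEmpty]
    simp
  · have hne (p : DyckWord) (hp : p.semilength = n + 1) : p ≠ 0 := by
      rintro rfl
      simp at hp
    rw [map_sub, countingGF, countingGF, coeff_mk, coeff_mk, coeff_one, if_neg n.succ_ne_zero,
      sub_zero, Nat.card_congr (Equiv.subtypeEquivRight fun p => ?_)]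
    exact ⟨fun hp => ⟨hp.1, hp.2.2⟩, fun hp => ⟨hp.1, hne p hp.1, hp.2⟩⟩

lemma countingGF_and_add_countingGF_not_and (P Q : DyckWord → Prop) :
    countingGF (fun p => P p ∧ Q p) + countingGF (fun p => ¬ P p ∧ Q p) = countingGF Q := by
  classical
  ext n
  simp only [countingGF, map_add, coeff_mk]
  have e (R : DyckWord → Prop) : {p : DyckWord // p.semilength = n ∧ R p ∧ Q p} ≃
      {x : {p : DyckWord // p.semilength = n ∧ Q p} // R x} :=
    (Equiv.subtypeEquivRight fun p => by tauto).trans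
      (Equiv.subtypeSubtypeEquivSubtypeInter _ R).symm
  rw [← Nat.cast_add, ← Nat.card_sum,
    Nat.card_congr ((e P).sumCongr (e (¬ P ·)) |>.trans (Equiv.sumCompl _))]

theorem catalanGF_eq_one_add_X_mul : catalanGF = 1 + X * (catalanGF * catalanGF) := by
  rw [← countingGF_true]
  exact countingGF_eq_one_add_X_mul trivial fun _ _ => and_self_iff.symm

theorem countingGF_not_hasPeakAtHeight_one_eq_one_add_X_mul :
    countingGF (¬ ·.HasPeakAtHeight 1) =
      1 + X * ((catalanGF - 1) * countingGF (¬ ·.HasPeakAtHeight 1)) := by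
  rw [← countingGF_true, ← countingGF_ne_zero_and trivial]
  refine countingGF_eq_one_add_X_mul (not_zero_hasPeakAtHeight 1) fun q r => ?_
  simp [hasPeakAtHeight_nest_add_succ (h := 0), not_hasPeakAtHeight_zero]

theorem countingGF_not_hasPeakAtHeight_two_eq_one_add_X_mul :
    countingGF (¬ ·.HasPeakAtHeight 2) =
      1 + X * (countingGF (¬ ·.HasPeakAtHeight 1) * countingGF (¬ ·.HasPeakAtHeight 2)) := by
  refine countingGF_eq_one_add_X_mul (not_zero_hasPeakAtHeight 2) fun q r => ?_
  simp [hasPeakAtHeight_nest_add_succ (h := 1)]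

theorem countingGF_not_hasPeakAtHeight_one_two_eq_one_add_X_mul :
    countingGF (fun p => ¬ p.HasPeakAtHeight 1 ∧ ¬ p.HasPeakAtHeight 2) =
      1 + X * ((countingGF (¬ ·.HasPeakAtHeight 1) - 1) *
        countingGF (fun p => ¬ p.HasPeakAtHeight 1 ∧ ¬ p.HasPeakAtHeight 2)) := by
  rw [← countingGF_ne_zero_and (not_zero_hasPeakAtHeight 1)]
  refine countingGF_eq_one_add_X_mul ⟨not_zero_hasPeakAtHeight 1, not_zero_hasPeakAtHeight 2⟩
    fun q r => ?_
  simp [hasPeakAtHeight_nest_add_succ (h := 0), hasPeakAtHeight_nest_add_succ (h := 1),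
    not_hasPeakAtHeight_zero]
  tauto

theorem countingGF_not_hasPeakAtHeight_one_mul :
    countingGF (¬ ·.HasPeakAtHeight 1) * (1 + X * catalanGF) = catalanGF := by
  linear_combination catalanGF * countingGF_not_hasPeakAtHeight_one_eq_one_add_X_mul -
    countingGF (¬ ·.HasPeakAtHeight 1) * catalanGF_eq_one_add_X_mul

theorem countingGF_not_hasPeakAtHeight_two :
    countingGF (¬ ·.HasPeakAtHeight 2) = 1 + X * catalanGF := by
  have hB := countingGF_not_hasPeakAtHeight_one_mul
  have hT := countingGF_not_hasPeakAtHeight_two_eq_one_add_X_mul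
  -- `T (1 - X B) = 1 = (1 + X C) (1 - X B)`, and `1 - X B` is not a zero divisor
  have hne : 1 - X * countingGF (¬ ·.HasPeakAtHeight 1) ≠ 0 := fun h => by
    simpa using congrArg constantCoeff h
  refine sub_eq_zero.1 ((mul_eq_zero.1 ?_).resolve_left hne)
  linear_combination hT + X * hB

end DyckWord

open DyckWord PowerSeries in
/-- if `g n` is the number of Dyck paths of semilength `n` with mex 2
(at least one peak at height 1 and no peak at height 2), then
`(1 + X + X²·C(X)) · Σ g(n) Xⁿ = X(1 − X) + 3X²·C(X)` in `ℤ⟦X⟧`. -/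
theorem stmt_17 :
    (1 + (PowerSeries.X : PowerSeries ℤ) + PowerSeries.X ^ 2 * catalanGF) *
        PowerSeries.mk
          (fun n =>
            (Nat.card {p : DyckWord //
              p.semilength = n ∧ p.HasPeakAtHeight 1 ∧ ¬ p.HasPeakAtHeight 2} : ℤ)) =
      PowerSeries.X * (1 - PowerSeries.X) + 3 * PowerSeries.X ^ 2 * catalanGF := by
  have hC := catalanGF_eq_one_add_X_mul
  have hB := countingGF_not_hasPeakAtHeight_one_mul
  have hT := countingGF_not_hasPeakAtHeight_two
  have hH := countingGF_not_hasPeakAtHeight_one_two_eq_one_add_X_mul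
  have hG := countingGF_and_add_countingGF_not_and (·.HasPeakAtHeight 1) (¬ ·.HasPeakAtHeight 2)
  change _ * countingGF _ = _
  set H := countingGF fun p => ¬ p.HasPeakAtHeight 1 ∧ ¬ p.HasPeakAtHeight 2
  linear_combination (1 + X + X ^ 2 * catalanGF) * (hG + hT) - X ^ 2 * hC
    - (1 + X * catalanGF) * hH - X * H * hB
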